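/- Fix an integer n ≥ 1. For every homogeneous y ∈ p(n) of parity q (i.e. q = 0 and y ∈ p(n)₀, or q = 1 and y ∈ p(n)₁), the following identity holds in M_{2n}(ℂ) ⊗ M_{2n}(ℂ): Σ_{x ∈ 𝒳} ( [y, x] ⊗ x* + (−1)^{q·x̄} x ⊗ [y, x*] ) = 0, where x̄ is the parity of x (the A⁻_{ij} have parity 0, the B⁺_{ij} and C⁻_{ij} have parity 1), x* is the dual basis element of x, and the superbracket of homogeneous matrices u, v of parities ū, v̄ is [u, v] = uv − (−1)^{ū·v̄} vu. (This expresses that the fake Casimir Ω = 2 Σ_{x∈𝒳} x ⊗ x* super-commutes with the coproduct of every element of p(n).) -/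

import Mathlib

open scoped TensorProduct

/-- Row/column index set `{1,…,n} ∪ {1',…,n'}` for `2n × 2n` matrices:
`.inl i` is the unprimed index `i`, `.inr i` the primed index `i'`. -/
abbrev PIdx (n : ℕ) := Fin n ⊕ Fin n

/-- The space `M_{2n}(ℂ)` of `2n × 2n` complex matrices. -/
abbrev PMat (n : ℕ) := Matrix (PIdx n) (PIdx n) ℂ

/-- Matrix units `E_{rs}`. -/
noncomputable def Eu (n : ℕ) (r s : PIdx n) : PMat n := Matrix.single r s 1

/-- `A⁻_{ij} = E_{ij} − E_{j'i'}`. -/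
noncomputable def Am (n : ℕ) (i j : Fin n) : PMat n :=
  Eu n (.inl i) (.inl j) - Eu n (.inr j) (.inr i)

/-- `A⁺_{ij} = E_{ij} + E_{j'i'}`. -/
noncomputable def Ap (n : ℕ) (i j : Fin n) : PMat n :=
  Eu n (.inl i) (.inl j) + Eu n (.inr j) (.inr i)

/-- `B⁺_{ij} = E_{ij'} + E_{ji'}`. -/
noncomputable def Bp (n : ℕ) (i j : Fin n) : PMat n :=
  Eu n (.inl i) (.inr j) + Eu n (.inl j) (.inr i)

/-- `B⁻_{ij} = E_{ij'} − E_{ji'}`. -/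
noncomputable def Bm (n : ℕ) (i j : Fin n) : PMat n :=
  Eu n (.inl i) (.inr j) - Eu n (.inl j) (.inr i)

/-- `C⁺_{ij} = E_{i'j} + E_{j'i}`. -/
noncomputable def Cp (n : ℕ) (i j : Fin n) : PMat n :=
  Eu n (.inr i) (.inl j) + Eu n (.inr j) (.inl i)

/-- `C⁻_{ij} = E_{i'j} − E_{j'i}`. -/
noncomputable def Cm (n : ℕ) (i j : Fin n) : PMat n :=
  Eu n (.inr i) (.inl j) - Eu n (.inr j) (.inl i)

/-- The periplectic Lie superalgebra `p(n) ⊆ M_{2n}(ℂ)`, i.e. all block matrices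
`(A B; C −Aᵀ)` with `Bᵀ = B` and `Cᵀ = −C`, as a `ℂ`-subspace of `M_{2n}(ℂ)`. -/
noncomputable def pAlg (n : ℕ) : Submodule ℂ (PMat n) where
  carrier := {x | (∀ i j, x (.inr i) (.inr j) = -x (.inl j) (.inl i)) ∧
                  (∀ i j, x (.inl i) (.inr j) = x (.inl j) (.inr i)) ∧
                  (∀ i j, x (.inr i) (.inl j) = -x (.inr j) (.inl i))}
  add_mem' := by
    rintro x y ⟨hx1, hx2, hx3⟩ ⟨hy1, hy2, hy3⟩
    refine ⟨fun i j => ?_, fun i j => ?_, fun i j => ?_⟩ <;>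
      simp only [Matrix.add_apply, hx1 i j, hx2 i j, hx3 i j, hy1 i j, hy2 i j, hy3 i j] <;>
      ring
  zero_mem' := by
    refine ⟨fun i j => ?_, fun i j => ?_, fun i j => ?_⟩ <;> simp
  smul_mem' := by
    rintro c x ⟨hx1, hx2, hx3⟩
    refine ⟨fun i j => ?_, fun i j => ?_, fun i j => ?_⟩ <;>
      simp only [Matrix.smul_apply, hx1 i j, hx2 i j, hx3 i j, smul_eq_mul] <;> ring

/-- Index set for the basis `𝒳` of `p(n)`: pairs `(i,j)` for the `A⁻_{ij}`,
pairs `i ≤ j` for the `B⁺_{ij}`, and pairs `i < j` for the `C⁻_{ij}`. -/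
abbrev PBIdx (n : ℕ) :=
  (Fin n × Fin n) ⊕ ({p : Fin n × Fin n // p.1 ≤ p.2} ⊕ {p : Fin n × Fin n // p.1 < p.2})

/-- The family `𝒳 = {A⁻_{ij}} ∪ {B⁺_{ij} : i ≤ j} ∪ {C⁻_{ij} : i < j}`. -/
noncomputable def Xfam (n : ℕ) : PBIdx n → PMat n
  | .inl p => Am n p.1 p.2
  | .inr (.inl p) => Bp n p.1.1 p.1.2
  | .inr (.inr p) => Cm n p.1.1 p.1.2

/-- The dual family `𝒳*`. -/
noncomputable def XDual (n : ℕ) : PBIdx n → PMat n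
  | .inl p => (1 / 2 : ℂ) • Ap n p.2 p.1
  | .inr (.inl p) =>
      if p.1.1 = p.1.2 then (-(1 / 4 : ℂ)) • Cp n p.1.2 p.1.1
      else (-(1 / 2 : ℂ)) • Cp n p.1.2 p.1.1
  | .inr (.inr p) => (1 / 2 : ℂ) • Bm n p.1.2 p.1.1

/-- The parity of the basis element `x ∈ 𝒳`: the `A⁻_{ij}` are even, the `B⁺_{ij}` and
`C⁻_{ij}` are odd. -/
def parX {n : ℕ} : PBIdx n → ℕ
  | .inl _ => 0
  | .inr _ => 1

/-- The superbracket `[u,v] = uv − (−1)^{ū·v̄} vu` of homogeneous matrices of parities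
`pu`, `pv`. -/
noncomputable def sbr (n : ℕ) (pu pv : ℕ) (u v : PMat n) : PMat n :=
  u * v - ((-1 : ℂ) ^ (pu * pv)) • (v * u)

/-- `x` is homogeneous of parity `p`. -/
def IsHomog {n : ℕ} (x : PMat n) (p : ℕ) : Prop :=
  (p = 0 ∧ ∀ i j, x (.inl i) (.inr j) = 0 ∧ x (.inr i) (.inl j) = 0) ∨
  (p = 1 ∧ ∀ i j, x (.inl i) (.inl j) = 0 ∧ x (.inr i) (.inr j) = 0)

/-!
For homogeneous `u`, the superbracket `[y, u]` with `y` of parity `q` is `δ u = y u - (J^q u J^q) y`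
with `J = diag(1, -1)`, because conjugation by `J^q` multiplies `u` by `(-1)^(q ū)`. Hence each
summand is `D (x ⊗ x*)` for the linear map `D = δ ⊗ 1 + J^q (·) J^q ⊗ δ`, and the sum is `D Ω` with
`Ω = Σ x ⊗ x*`. Symmetrising the `B`- and `C`-sums gives `Ω = ½ (P + Q)`, where
`P = Σ (-1)^|s| E_rs ⊗ E_sr` is the super flip and `Q = Σ ± E_rs ⊗ E_r's'` is the tensor of the odd
form preserved by `p(n)`. `D` kills `P` for every homogeneous `y` and `Q` for every homogeneous
`y ∈ p(n)`, as one checks on the coefficients of the Kronecker product.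
-/

section SymmetricSums

variable {ι M : Type*} [LinearOrder ι] [Fintype ι] [AddCommMonoid M]

lemma sum_eq_sum_lt_add_sum_le (g : ι × ι → M) (hg : ∀ p, g p.swap = g p) :
    ∑ p, g p = ∑ p : {p : ι × ι // p.1 < p.2}, g p + ∑ p : {p : ι × ι // p.1 ≤ p.2}, g p := by
  rw [← Fintype.sum_subtype_add_sum_subtype (fun p : ι × ι => p.1 ≤ p.2) g, add_comm]
  congr 1
  exact Fintype.sum_equiv ⟨fun p => ⟨p.1.swap, not_le.mp p.2⟩, fun p => ⟨p.1.swap, not_le.mpr p.2⟩,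
    fun _ => rfl, fun _ => rfl⟩ _ _ fun p => (hg p.1).symm

lemma sum_le_eq_sum_lt_add_sum_diag (g : ι × ι → M) :
    ∑ p : {p : ι × ι // p.1 ≤ p.2}, g p = ∑ p : {p : ι × ι // p.1 < p.2}, g p + ∑ i, g (i, i) := by
  rw [← Fintype.sum_subtype_add_sum_subtype (fun p : {p : ι × ι // p.1 ≤ p.2} => p.1.1 < p.1.2)]
  congr 1
  · exact Fintype.sum_equiv ⟨fun p => ⟨p.1.1, p.2⟩, fun p => ⟨⟨p.1, p.2.le⟩, p.2⟩,
      fun _ => rfl, fun _ => rfl⟩ _ _ fun _ => rfl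
  · refine Fintype.sum_equiv ⟨fun p => p.1.1.1, fun i => ⟨⟨(i, i), le_rfl⟩, lt_irrefl i⟩,
      fun p => ?_, fun _ => rfl⟩ _ _ fun p => ?_ <;>
    · obtain ⟨⟨⟨a, b⟩, hle⟩, hlt⟩ := p
      obtain rfl : a = b := le_antisymm hle (not_lt.mp hlt)
      rfl

variable {𝕜 : Type*} [Field 𝕜] [CharZero 𝕜] {V : Type*} [AddCommGroup V] [Module 𝕜 V]

lemma sum_lt_eq_half_sum (g : ι × ι → V) (hg : ∀ p, g p.swap = g p) (hdiag : ∀ i, g (i, i) = 0) :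
    ∑ p : {p : ι × ι // p.1 < p.2}, g p = (2 : 𝕜)⁻¹ • ∑ p, g p := by
  rw [sum_eq_sum_lt_add_sum_le g hg, sum_le_eq_sum_lt_add_sum_diag]
  simp only [hdiag, Finset.sum_const_zero, add_zero]
  module

lemma sum_le_halfDiag_eq_half_sum (g : ι × ι → V) (hg : ∀ p, g p.swap = g p) :
    ∑ p : {p : ι × ι // p.1 ≤ p.2}, (if p.1.1 = p.1.2 then (2 : 𝕜)⁻¹ • g p else g p)
      = (2 : 𝕜)⁻¹ • ∑ p, g p := by
  rw [sum_eq_sum_lt_add_sum_le g hg, sum_le_eq_sum_lt_add_sum_diag,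
    sum_le_eq_sum_lt_add_sum_diag fun p => if p.1 = p.2 then (2 : 𝕜)⁻¹ • g p else g p]
  simp only [if_pos, Finset.sum_congr rfl fun (p : {p : ι × ι // p.1 < p.2}) _ =>
    if_neg p.2.ne, ← Finset.smul_sum]
  module

end SymmetricSums

open scoped Kronecker
open Matrix

noncomputable section

namespace Periplectic

variable {n : ℕ}

def idxSign : PIdx n → ℂ := Sum.elim 1 (-1)

def gradeMat (n : ℕ) : PMat n := diagonal idxSign

def grade (q : ℕ) : PMat n →ₗ[ℂ] PMat n :=
  LinearMap.mulLeft ℂ (gradeMat n ^ q) ∘ₗ LinearMap.mulRight ℂ (gradeMat n ^ q)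

lemma grade_apply (q : ℕ) (u : PMat n) (a b : PIdx n) :
    grade q u a b = (idxSign a * idxSign b) ^ q * u a b := by
  simp only [grade, gradeMat, diagonal_pow, LinearMap.coe_comp, Function.comp_apply,
    LinearMap.mulRight_apply, LinearMap.mulLeft_apply, diagonal_mul, Pi.pow_apply, mul_diagonal,
    mul_pow]
  ring

lemma grade_of_isHomog {u : PMat n} {p : ℕ} (hu : IsHomog u p) (q : ℕ) :
    grade q u = (-1 : ℂ) ^ (q * p) • u := by
  ext a b
  rcases hu with ⟨rfl, hu⟩ | ⟨rfl, hu⟩ <;> cases a <;> cases b <;>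
    simp [grade_apply, idxSign, hu]

def superDeriv (y : PMat n) (q : ℕ) : PMat n →ₗ[ℂ] PMat n :=
  LinearMap.mulLeft ℂ y - LinearMap.mulRight ℂ y ∘ₗ grade q

lemma sbr_eq_superDeriv (y : PMat n) (q : ℕ) {u : PMat n} {p : ℕ} (hu : IsHomog u p) :
    sbr n q p y u = superDeriv y q u := by
  simp [sbr, superDeriv, grade_of_isHomog hu]

lemma isHomog_smul {u : PMat n} {p : ℕ} (hu : IsHomog u p) (c : ℂ) : IsHomog (c • u) p := by
  rcases hu with ⟨rfl, hu⟩ | ⟨rfl, hu⟩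
  · exact .inl ⟨rfl, fun i j => by simp [hu i j]⟩
  · exact .inr ⟨rfl, fun i j => by simp [hu i j]⟩

lemma isHomog_Xfam (t : PBIdx n) : IsHomog (Xfam n t) (parX t) := by
  rcases t with p | p | p
  · exact .inl ⟨rfl, fun i j => by simp [Xfam, Am, Eu]⟩
  · exact .inr ⟨rfl, fun i j => by simp [Xfam, Bp, Eu]⟩
  · exact .inr ⟨rfl, fun i j => by simp [Xfam, Cm, Eu]⟩

lemma isHomog_XDual (t : PBIdx n) : IsHomog (XDual n t) (parX t) := by
  rcases t with p | p | p
  · exact isHomog_smul (.inl ⟨rfl, fun i j => by simp [Ap, Eu]⟩) _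
  · have h : IsHomog (Cp n p.1.2 p.1.1) 1 := .inr ⟨rfl, fun i j => by simp [Cp, Eu]⟩
    simp only [XDual]
    split_ifs <;> exact isHomog_smul h _
  · exact isHomog_smul (.inr ⟨rfl, fun i j => by simp [Bm, Eu]⟩) _

def tensorDeriv (y : PMat n) (q : ℕ) : PMat n ⊗[ℂ] PMat n →ₗ[ℂ] PMat n ⊗[ℂ] PMat n :=
  TensorProduct.map (superDeriv y q) LinearMap.id + TensorProduct.map (grade q) (superDeriv y q)

lemma sbr_tmul_add_eq_tensorDeriv (y : PMat n) (q : ℕ) {u v : PMat n} {p : ℕ}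
    (hu : IsHomog u p) (hv : IsHomog v p) :
    sbr n q p y u ⊗ₜ[ℂ] v + ((-1 : ℂ) ^ (q * p)) • (u ⊗ₜ[ℂ] sbr n q p y v)
      = tensorDeriv y q (u ⊗ₜ v) := by
  simp [tensorDeriv, sbr_eq_superDeriv y q hu, sbr_eq_superDeriv y q hv, grade_of_isHomog hu,
    TensorProduct.smul_tmul']

def canonicalTensor (n : ℕ) : PMat n ⊗[ℂ] PMat n := ∑ t, Xfam n t ⊗ₜ[ℂ] XDual n t

def superFlip (n : ℕ) : PMat n ⊗[ℂ] PMat n :=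
  ∑ r, ∑ s, idxSign s • (Eu n r s ⊗ₜ[ℂ] Eu n s r)

def formSign : PIdx n → PIdx n → ℂ
  | .inl _, .inl _ => 1
  | _, _ => -1

def formTensor (n : ℕ) : PMat n ⊗[ℂ] PMat n :=
  ∑ r, ∑ s, formSign r s • (Eu n r s ⊗ₜ[ℂ] Eu n r.swap s.swap)

local notation "κ" => kroneckerLinearEquiv (PIdx n) (PIdx n) (PIdx n) (PIdx n) ℂ

lemma kron_tmul_apply (u v : PMat n) (a b c d : PIdx n) :
    κ (u ⊗ₜ v) (a, c) (b, d) = u a b * v c d := rfl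

lemma kron_superFlip_apply (a b c d : PIdx n) :
    κ (superFlip n) (a, c) (b, d) = if a = d ∧ b = c then idxSign b else 0 := by
  simp only [superFlip, map_sum, map_smul, Matrix.sum_apply, Matrix.smul_apply, kron_tmul_apply,
    Eu, single_apply, smul_eq_mul, mul_ite, mul_one, mul_zero, ite_and]
  simp only [eq_comm, Finset.sum_ite_eq, Finset.mem_univ, ↓reduceIte]
  split_ifs <;> simp_all

lemma kron_formTensor_apply (a b c d : PIdx n) :
    κ (formTensor n) (a, c) (b, d) = if c = a.swap ∧ d = b.swap then formSign a b else 0 := by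
  simp only [formTensor, map_sum, map_smul, Matrix.sum_apply, Matrix.smul_apply, kron_tmul_apply,
    Eu, single_apply, smul_eq_mul, mul_ite, mul_one, mul_zero, ite_and]
  have swap_eq (r s : PIdx n) : r.swap = s ↔ r = s.swap :=
    ⟨fun h => h ▸ (Sum.swap_swap r).symm, fun h => h ▸ Sum.swap_swap s⟩
  simp only [swap_eq]
  simp only [eq_comm, Finset.sum_ite_irrel, Finset.sum_ite_eq', Finset.mem_univ, ↓reduceIte,
    Finset.sum_const_zero]
  split_ifs <;> subst_vars <;> simp_all

lemma canonicalTensor_eq_sum : canonicalTensor n = (2⁻¹ : ℂ) • ∑ p : Fin n × Fin n,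
    (Am n p.1 p.2 ⊗ₜ[ℂ] Ap n p.2 p.1 - (2⁻¹ : ℂ) • (Bp n p.1 p.2 ⊗ₜ[ℂ] Cp n p.2 p.1)
      + (2⁻¹ : ℂ) • (Cm n p.1 p.2 ⊗ₜ[ℂ] Bm n p.2 p.1)) := by
  have hB : ∑ p : {p : Fin n × Fin n // p.1 ≤ p.2},
      Xfam n (.inr (.inl p)) ⊗ₜ[ℂ] XDual n (.inr (.inl p))
      = (2⁻¹ : ℂ) • ∑ p : Fin n × Fin n, (-(2⁻¹ : ℂ)) • (Bp n p.1 p.2 ⊗ₜ[ℂ] Cp n p.2 p.1) := by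
    rw [← sum_le_halfDiag_eq_half_sum]
    · refine Fintype.sum_congr _ _ fun p => ?_
      simp only [Xfam, XDual]
      split_ifs <;> simp only [TensorProduct.tmul_smul, smul_smul] <;> module
    · intro p
      simp only [Prod.fst_swap, Prod.snd_swap, Bp, Cp, add_comm]
  have hC : ∑ p : {p : Fin n × Fin n // p.1 < p.2},
      Xfam n (.inr (.inr p)) ⊗ₜ[ℂ] XDual n (.inr (.inr p))
      = (2⁻¹ : ℂ) • ∑ p : Fin n × Fin n, (2⁻¹ : ℂ) • (Cm n p.1 p.2 ⊗ₜ[ℂ] Bm n p.2 p.1) := by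
    simp only [Xfam, XDual, TensorProduct.tmul_smul, one_div]
    rw [← sum_lt_eq_half_sum]
    · intro p
      simp only [Prod.fst_swap, Prod.snd_swap, Cm, Bm]
      rw [← neg_sub, ← neg_sub (Eu n (.inl p.2) _), TensorProduct.neg_tmul, TensorProduct.tmul_neg,
        neg_neg]
    · intro i
      simp [Cm]
  rw [canonicalTensor, Fintype.sum_sum_type, Fintype.sum_sum_type, hB, hC]
  simp only [Xfam, XDual, TensorProduct.tmul_smul, Finset.smul_sum, ← Finset.sum_add_distrib]
  refine Fintype.sum_congr _ _ fun p => ?_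
  module

lemma sum_eq_superFlip_add_formTensor : ∑ p : Fin n × Fin n,
    (Am n p.1 p.2 ⊗ₜ[ℂ] Ap n p.2 p.1 - (2⁻¹ : ℂ) • (Bp n p.1 p.2 ⊗ₜ[ℂ] Cp n p.2 p.1)
      + (2⁻¹ : ℂ) • (Cm n p.1 p.2 ⊗ₜ[ℂ] Bm n p.2 p.1)) = superFlip n + formTensor n := by
  apply LinearEquiv.injective κ
  ext ⟨a, c⟩ ⟨b, d⟩
  rw [map_add, Matrix.add_apply, kron_superFlip_apply, kron_formTensor_apply]
  simp only [map_sum, map_add, map_sub, map_smul, Matrix.sum_apply, Matrix.add_apply,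
    Matrix.sub_apply, Matrix.smul_apply, kron_tmul_apply, Fintype.sum_prod_type]
  cases a <;> cases b <;> cases c <;> cases d <;>
    simp [Am, Ap, Bp, Bm, Cp, Cm, Eu, single_apply, formSign, idxSign, Finset.sum_add_distrib,
      Finset.sum_sub_distrib, mul_add, mul_sub, ite_and] <;>
    split_ifs <;> subst_vars <;> simp_all <;> ring

lemma canonicalTensor_eq : canonicalTensor n = (2⁻¹ : ℂ) • (superFlip n + formTensor n) := by
  rw [canonicalTensor_eq_sum, sum_eq_superFlip_add_formTensor]

lemma kron_tensorDeriv_apply (y : PMat n) (q : ℕ) (S : PMat n ⊗[ℂ] PMat n) (a b c d : PIdx n) :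
    κ (tensorDeriv y q S) (a, c) (b, d) = ∑ e,
      (y a e * κ S (e, c) (b, d) - (idxSign a * idxSign e) ^ q * κ S (a, c) (e, d) * y e b
        + (idxSign a * idxSign b) ^ q *
          (y c e * κ S (a, e) (b, d)
            - (idxSign c * idxSign e) ^ q * κ S (a, c) (b, e) * y e d)) := by
  induction S using TensorProduct.induction_on with
  | zero => simp
  | tmul u v =>
    simp only [tensorDeriv, LinearMap.add_apply, TensorProduct.map_tmul, LinearMap.id_apply,
      map_add, Matrix.add_apply, kron_tmul_apply, superDeriv, LinearMap.sub_apply,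
      LinearMap.comp_apply, LinearMap.mulLeft_apply, LinearMap.mulRight_apply, Matrix.sub_apply,
      Matrix.mul_apply, grade_apply, Finset.sum_mul, Finset.mul_sum, ← Finset.sum_sub_distrib,
      ← Finset.sum_add_distrib, sub_mul, mul_sub]
    refine Finset.sum_congr rfl fun e _ => ?_
    ring
  | add S T hS hT =>
    simp only [map_add, Matrix.add_apply, hS, hT, ← Finset.sum_add_distrib]
    refine Finset.sum_congr rfl fun e _ => ?_
    ring

lemma tensorDeriv_superFlip {y : PMat n} {q : ℕ} (hy : IsHomog y q) :
    tensorDeriv y q (superFlip n) = 0 := by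
  apply LinearEquiv.injective κ
  ext ⟨a, c⟩ ⟨b, d⟩
  rw [kron_tensorDeriv_apply, map_zero, Matrix.zero_apply]
  simp only [kron_superFlip_apply]
  rcases hy with ⟨rfl, hy⟩ | ⟨rfl, hy⟩ <;> cases a <;> cases b <;> cases c <;> cases d <;>
    simp [idxSign, hy, ite_and, mul_ite, Finset.sum_add_distrib, Finset.sum_sub_distrib]

lemma tensorDeriv_formTensor {y : PMat n} {q : ℕ} (hp : y ∈ pAlg n) (hy : IsHomog y q) :
    tensorDeriv y q (formTensor n) = 0 := by
  obtain ⟨h₁, h₂, h₃⟩ := hp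
  apply LinearEquiv.injective κ
  ext ⟨a, c⟩ ⟨b, d⟩
  rw [kron_tensorDeriv_apply, map_zero, Matrix.zero_apply]
  simp only [kron_formTensor_apply]
  rcases hy with ⟨rfl, hy⟩ | ⟨rfl, hy⟩ <;> cases a <;> cases b <;> cases c <;> cases d <;>
    simp only [Sum.swap_inl, Sum.swap_inr, formSign, idxSign, Sum.elim_inl, Sum.elim_inr] <;>
    simp [hy, h₁, ite_and, mul_ite, Finset.sum_add_distrib, Finset.sum_sub_distrib] <;>
    split_ifs <;> subst_vars <;> first | ring1 | (rw [h₂]; ring1) | (rw [h₃]; ring1)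

end Periplectic

end

theorem statement4_general (n : ℕ) (y : PMat n) (hy : y ∈ pAlg n) (q : ℕ)
    (hq : IsHomog y q) :
    ∑ t : PBIdx n,
        (sbr n q (parX t) y (Xfam n t) ⊗ₜ[ℂ] XDual n t
          + ((-1 : ℂ) ^ (q * parX t)) • (Xfam n t ⊗ₜ[ℂ] sbr n q (parX t) y (XDual n t)))
      = (0 : PMat n ⊗[ℂ] PMat n) := by
  rw [Fintype.sum_congr _ _ fun t => Periplectic.sbr_tmul_add_eq_tensorDeriv y q
    (Periplectic.isHomog_Xfam t) (Periplectic.isHomog_XDual t), ← map_sum]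
  change Periplectic.tensorDeriv y q (Periplectic.canonicalTensor n) = 0
  rw [Periplectic.canonicalTensor_eq, map_smul, map_add, Periplectic.tensorDeriv_superFlip hq,
    Periplectic.tensorDeriv_formTensor hy hq, add_zero, smul_zero]

/-- for every homogeneous `y ∈ p(n)` of parity `q`,
`Σ_{x ∈ 𝒳} ([y,x] ⊗ x* + (−1)^{q·x̄} x ⊗ [y,x*]) = 0` in `M_{2n}(ℂ) ⊗ M_{2n}(ℂ)`;
i.e. the fake Casimir `Ω = 2 Σ_{x∈𝒳} x ⊗ x*` supercommutes with the coproduct of `y`. -/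
theorem statement4 (n : ℕ) (hn : 1 ≤ n) (y : PMat n) (hy : y ∈ pAlg n) (q : ℕ)
    (hq : IsHomog y q) :
    ∑ t : PBIdx n,
        (sbr n q (parX t) y (Xfam n t) ⊗ₜ[ℂ] XDual n t
          + ((-1 : ℂ) ^ (q * parX t)) • (Xfam n t ⊗ₜ[ℂ] sbr n q (parX t) y (XDual n t)))
      = (0 : PMat n ⊗[ℂ] PMat n) :=
  statement4_general n y hy q hq
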